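/- arXiv:2302.07325 — 2 statements merged into one kernel-verified Lean document; each statement's English description precedes it below -/
import Mathlib

section
/- Let β > 0, R > 0, η(x) = (1 − |x|²/(4R²))^β on B_{2R} ⊂ ℝⁿ, and let w : B_{2R} → ℝ be continuous, nonnegative, vanishing on ∂B_{2R} (extended continuously), and set v = η·w for some function w with v differentiable. Suppose x ∈ B_{2R} lies in the upper contact set of v, i.e. v(z) ≤ v(x) + Dv(x)·(z−x) for all z ∈ B_{2R}. Then R η(x)^{1/β} |Dv(x)| ≤ v(x). -/
/-!
Walking from `x` in the direction `-Dv(x)` one stays inside `B_{2R}` for a length `2R - |x|`;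
along the way `v ≥ 0`, while the tangent plane above `v` drops at rate `|Dv(x)|`, so
`(2R - |x|) |Dv(x)| ≤ v(x)`. It remains to note `R η(x)^{1/β} = R - |x|²/(4R) ≤ 2R - |x|`.
-/

open Metric

section

variable {E : Type*} [NormedAddCommGroup E] [NormedSpace ℝ E]

theorem ContinuousLinearMap.norm_le_of_forall_norm_lt_one_apply_le (L : E →L[ℝ] ℝ) {C : ℝ}
    (hL : ∀ u : E, ‖u‖ < 1 → L u ≤ C) : ‖L‖ ≤ C := by
  by_contra! hC
  obtain ⟨u, hu, hCu⟩ := L.exists_lt_apply_of_lt_opNorm hC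
  have hneg : L (-u) ≤ C := hL (-u) (by rwa [norm_neg])
  rw [map_neg] at hneg
  rw [Real.norm_eq_abs, lt_abs] at hCu
  rcases hCu with hCu | hCu <;> linarith [hL u hu]

theorem mul_norm_le_of_forall_le_add_of_nonneg {f : E → ℝ} {L : E →L[ℝ] ℝ} {c x : E} {r : ℝ}
    (hx : x ∈ ball c r) (hf : ∀ z ∈ ball c r, 0 ≤ f z)
    (hcontact : ∀ z ∈ ball c r, f z ≤ f x + L (z - x)) :
    (r - dist x c) * ‖L‖ ≤ f x := by
  set d := r - dist x c
  have hd : 0 < d := sub_pos.2 (mem_ball.1 hx)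
  rw [← Real.norm_of_nonneg hd.le, ← norm_smul]
  refine (d • L).norm_le_of_forall_norm_lt_one_apply_le fun u hu => ?_
  have hz : x - d • u ∈ ball c r := by
    rw [mem_ball]
    calc dist (x - d • u) c = ‖(x - c) - d • u‖ := by rw [dist_eq_norm, sub_right_comm]
      _ ≤ ‖x - c‖ + ‖d • u‖ := norm_sub_le _ _
      _ = dist x c + d * ‖u‖ := by rw [dist_eq_norm, norm_smul, Real.norm_of_nonneg hd.le]
      _ < dist x c + d * 1 := by gcongr
      _ = r := by ring
  have hplane := hcontact _ hz
  rw [sub_sub_cancel_left, map_neg, map_smul, smul_eq_mul] at hplane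
  rw [smul_apply, smul_eq_mul]
  linarith [hf _ hz]

end

theorem one_sub_sq_div_four_mul_sq_nonneg {t R : ℝ} (ht₀ : 0 ≤ t) (ht : t ≤ 2 * R) :
    0 ≤ 1 - t ^ 2 / (4 * R ^ 2) := by
  have : t ^ 2 ≤ 4 * R ^ 2 := by nlinarith
  exact sub_nonneg.2 (div_le_one_of_le₀ this (by positivity))

theorem mul_one_sub_sq_div_four_mul_sq_le {R : ℝ} (hR : 0 < R) (t : ℝ) :
    R * (1 - t ^ 2 / (4 * R ^ 2)) ≤ 2 * R - t := by
  have key : 2 * R - t - R * (1 - t ^ 2 / (4 * R ^ 2)) = (2 * R - t) ^ 2 / (4 * R) := by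
    field_simp
    ring
  have : 0 ≤ (2 * R - t) ^ 2 / (4 * R) := by positivity
  linarith

theorem contact_set_gradient_bound_general
    (n : ℕ) (β R : ℝ) (hβ : 0 < β) (hR : 0 < R)
    (w v : EuclideanSpace ℝ (Fin n) → ℝ)
    (hwnn : ∀ y ∈ Metric.closedBall (0 : EuclideanSpace ℝ (Fin n)) (2 * R), 0 ≤ w y)
    (hv : ∀ y, v y = (1 - ‖y‖ ^ 2 / (4 * R ^ 2)) ^ β * w y)
    (x : EuclideanSpace ℝ (Fin n))
    (hx : x ∈ Metric.ball (0 : EuclideanSpace ℝ (Fin n)) (2 * R))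
    (hcontact : ∀ z ∈ Metric.ball (0 : EuclideanSpace ℝ (Fin n)) (2 * R),
      v z ≤ v x + fderiv ℝ v x (z - x)) :
    R * (((1 - ‖x‖ ^ 2 / (4 * R ^ 2)) ^ β) ^ (1 / β)) * ‖fderiv ℝ v x‖ ≤ v x := by
  have hη : ∀ y ∈ closedBall (0 : EuclideanSpace ℝ (Fin n)) (2 * R),
      0 ≤ 1 - ‖y‖ ^ 2 / (4 * R ^ 2) := fun y hy =>
    one_sub_sq_div_four_mul_sq_nonneg (norm_nonneg y) (mem_closedBall_zero_iff.1 hy)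
  have hvnn : ∀ y ∈ ball (0 : EuclideanSpace ℝ (Fin n)) (2 * R), 0 ≤ v y := fun y hy => by
    rw [hv y]
    exact mul_nonneg (Real.rpow_nonneg (hη y (ball_subset_closedBall hy)) β)
      (hwnn y (ball_subset_closedBall hy))
  have hgrad := mul_norm_le_of_forall_le_add_of_nonneg hx hvnn hcontact
  rw [dist_zero_right] at hgrad
  rw [one_div, Real.rpow_rpow_inv (hη x (ball_subset_closedBall hx)) hβ.ne']
  calc R * (1 - ‖x‖ ^ 2 / (4 * R ^ 2)) * ‖fderiv ℝ v x‖
      ≤ (2 * R - ‖x‖) * ‖fderiv ℝ v x‖ := by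
        gcongr
        exact mul_one_sub_sq_div_four_mul_sq_le hR _
    _ ≤ v x := hgrad

/-- Upper contact set gradient bound: with η(x) = (1−|x|²/(4R²))^β and v = η·w, w
continuous and nonnegative on the closed ball (so v vanishes on ∂B_{2R}), every point x
of the upper contact set of v in B_{2R} satisfies R η(x)^{1/β} |Dv(x)| ≤ v(x). -/
theorem contact_set_gradient_bound
    (n : ℕ) (β R : ℝ) (hβ : 0 < β) (hR : 0 < R)
    (w v : EuclideanSpace ℝ (Fin n) → ℝ)
    (hw : ContinuousOn w (Metric.closedBall 0 (2 * R)))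
    (hwnn : ∀ y ∈ Metric.closedBall (0 : EuclideanSpace ℝ (Fin n)) (2 * R), 0 ≤ w y)
    (hv : ∀ y, v y = (1 - ‖y‖ ^ 2 / (4 * R ^ 2)) ^ β * w y)
    (x : EuclideanSpace ℝ (Fin n))
    (hx : x ∈ Metric.ball (0 : EuclideanSpace ℝ (Fin n)) (2 * R))
    (hvd : DifferentiableAt ℝ v x)
    (hcontact : ∀ z ∈ Metric.ball (0 : EuclideanSpace ℝ (Fin n)) (2 * R),
      v z ≤ v x + fderiv ℝ v x (z - x)) :
    R * (((1 - ‖x‖ ^ 2 / (4 * R ^ 2)) ^ β) ^ (1 / β)) * ‖fderiv ℝ v x‖ ≤ v x :=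
  contact_set_gradient_bound_general n β R hβ hR w v hwnn hv x hx hcontact
end

section
/- Let A be a symmetric n×n matrix with λ(A) ∈ Γ₂⁺ and let F = σ₁(λ(A))Id − A be the first Newton tensor. Then F ≥ (σ₂(λ(A))/σ₁(λ(A))) · Id as quadratic forms; equivalently, for every unit vector ξ, (Fξ, ξ) ≥ σ₂(λ(A))/σ₁(λ(A)). -/
/-!
In an eigenbasis of `A` the tensor `F = σ₁ Id − A` is diagonal with entries `σ₁ − λᵢ`, so it
suffices that `σ₁ (σ₁ − λᵢ) ≥ σ₂` for every `i`. Since `σ₁² = ∑ λⱼ² + 2σ₂ ≥ λᵢ² + 2σ₂`, this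
reduces to `σ₁² − 2σ₁λᵢ + λᵢ² = (σ₁ − λᵢ)² ≥ 0`.
-/

open Matrix
open scoped MatrixOrder ComplexOrder

section SigmaTwo

variable {ι R : Type*} [Fintype ι] [LinearOrder ι]

def sigmaTwo [CommRing R] (l : ι → R) : R := ∑ i, ∑ j, if i < j then l i * l j else 0

theorem sq_sum_eq_sum_sq_add_two_mul_sigmaTwo [CommRing R] (l : ι → R) :
    (∑ i, l i) ^ 2 = ∑ i, l i ^ 2 + 2 * sigmaTwo l := by
  have split (i j : ι) : l i * l j = (if i < j then l i * l j else 0)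
      + (if j < i then l j * l i else 0) + (if i = j then l i * l j else 0) := by
    rcases lt_trichotomy i j with h | rfl | h
    · simp [h, h.ne, h.not_gt]
    · simp
    · simp [h, h.ne', h.not_gt, mul_comm]
  calc (∑ i, l i) ^ 2 = ∑ i, ∑ j, l i * l j := by rw [sq, Finset.sum_mul_sum]
    _ = sigmaTwo l + ∑ j, ∑ i, (if j < i then l j * l i else 0) + ∑ i, l i ^ 2 := by
      rw [Finset.sum_congr rfl fun i _ => Finset.sum_congr rfl fun j _ => split i j]
      simp only [Finset.sum_add_distrib, Finset.sum_ite_eq, Finset.mem_univ, if_true, sq]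
      rw [Finset.sum_comm (f := fun i j => if j < i then l j * l i else 0)]
      rfl
    _ = ∑ i, l i ^ 2 + 2 * sigmaTwo l := by rw [← sigmaTwo]; ring

theorem sigmaTwo_le_sum_mul_sum_sub [CommRing R] [LinearOrder R] [IsStrictOrderedRing R]
    (l : ι → R) (k : ι) : sigmaTwo l ≤ (∑ i, l i) * (∑ i, l i - l k) := by
  have hk : l k ^ 2 ≤ ∑ i, l i ^ 2 :=
    Finset.single_le_sum (fun i _ => sq_nonneg (l i)) (Finset.mem_univ k)
  nlinarith [sq_sum_eq_sum_sq_add_two_mul_sigmaTwo l, sq_nonneg (∑ i, l i - l k)]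

end SigmaTwo

theorem Matrix.IsHermitian.posSemidef_smul_one_sub_of_eigenvalues_le {𝕜 n : Type*} [RCLike 𝕜]
    [Fintype n] [DecidableEq n] {A : Matrix n n 𝕜} (hA : A.IsHermitian) {r : ℝ}
    (h : ∀ i, hA.eigenvalues i ≤ r) : (r • (1 : Matrix n n 𝕜) - A).PosSemidef := by
  have : A ≤ algebraMap ℝ (Matrix n n 𝕜) r := by
    refine le_algebraMap_of_spectrum_le (fun x hx => ?_) hA.isSelfAdjoint
    obtain ⟨i, rfl⟩ := hA.spectrum_real_eq_range_eigenvalues ▸ hx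
    exact h i
  simpa [Matrix.le_iff, Algebra.algebraMap_eq_smul_one] using this

theorem newton_tensor_lower_bound_general
    (n : ℕ) (A : Matrix (Fin n) (Fin n) ℝ) (hA : A.IsHermitian)
    (h1 : 0 < ∑ i, hA.eigenvalues i) :
    ∀ ξ : Fin n → ℝ, (∑ i, ξ i ^ 2) = 1 →
      (∑ i, ∑ j, if i < j then hA.eigenvalues i * hA.eigenvalues j else 0) /
          (∑ i, hA.eigenvalues i)
        ≤ ξ ⬝ᵥ (((∑ i, hA.eigenvalues i) • (1 : Matrix (Fin n) (Fin n) ℝ) - A) *ᵥ ξ) := by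
  intro ξ hξ
  set σ₁ := ∑ i, hA.eigenvalues i
  change sigmaTwo hA.eigenvalues / σ₁ ≤ _
  have hev (k : Fin n) : hA.eigenvalues k ≤ σ₁ - sigmaTwo hA.eigenvalues / σ₁ := by
    have := sigmaTwo_le_sum_mul_sum_sub hA.eigenvalues k
    rw [le_sub_comm, div_le_iff₀ h1]
    linarith
  have hpsd := (hA.posSemidef_smul_one_sub_of_eigenvalues_le hev).dotProduct_mulVec_nonneg ξ
  have hξξ : ξ ⬝ᵥ ξ = 1 := by simpa [dotProduct, sq] using hξ
  simp only [star_trivial, sub_smul, sub_mulVec, smul_mulVec, one_mulVec, dotProduct_sub,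
    dotProduct_smul, hξξ, smul_eq_mul, mul_one] at hpsd ⊢
  linarith

/-- For a symmetric matrix A with λ(A) ∈ Γ₂⁺, the first Newton tensor
F = σ₁(λ(A))Id − A satisfies F ≥ (σ₂/σ₁)·Id: for every unit vector ξ,
⟨Fξ, ξ⟩ ≥ σ₂(λ(A))/σ₁(λ(A)). -/
theorem newton_tensor_lower_bound
    (n : ℕ) (A : Matrix (Fin n) (Fin n) ℝ) (hA : A.IsHermitian)
    (h1 : 0 < ∑ i, hA.eigenvalues i)
    (h2 : 0 < ∑ i, ∑ j, if i < j then hA.eigenvalues i * hA.eigenvalues j else 0) :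
    ∀ ξ : Fin n → ℝ, (∑ i, ξ i ^ 2) = 1 →
      (∑ i, ∑ j, if i < j then hA.eigenvalues i * hA.eigenvalues j else 0) /
          (∑ i, hA.eigenvalues i)
        ≤ ξ ⬝ᵥ (((∑ i, hA.eigenvalues i) • (1 : Matrix (Fin n) (Fin n) ℝ) - A) *ᵥ ξ) :=
  newton_tensor_lower_bound_general n A hA h1
end
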